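/- Let G be an abelian topological group, H a closed subgroup of G such that the quotient group G/H is a torsion group, X a topological vector space over ℂ, and n ∈ ℕ. Then the restriction map r : P^n(G,X) → P^n(H,X), r(p) = p|_H, is injective; consequently dim P^n(G,X) ≤ dim P^n(H,X). -/

import Mathlib

open scoped BigOperators

/-- Forward difference operator: `delta h f t = f (t + h) - f t`. -/
def delta {J X : Type*} [Add J] [Sub X] (h : J) (f : J → X) : J → X :=
  fun t => f (t + h) - f t

/-- `f : J → X` is a (continuous) polynomial of degree at most `n`,
i.e. `f ∈ P^n(J, X)`. -/
def IsPolyDeg {J X : Type*} [Add J] [Sub X] [Zero X] [TopologicalSpace J] [TopologicalSpace X]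
    (n : ℕ) (f : J → X) : Prop :=
  Continuous f ∧ ∀ h : J, (delta h)^[n + 1] f = 0

theorem delta_add {J X : Type*} [Add J] [AddCommGroup X] (h : J) (f g : J → X) :
    delta h (f + g) = delta h f + delta h g := by
  funext t
  simp only [delta, Pi.add_apply]
  abel

theorem delta_smul {J X : Type*} [Add J] [AddCommGroup X] [Module ℂ X]
    (h : J) (c : ℂ) (f : J → X) :
    delta h (c • f) = c • delta h f := by
  funext t
  simp only [delta, Pi.smul_apply, smul_sub]

theorem delta_zero {J X : Type*} [Add J] [AddCommGroup X] (h : J) :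
    delta h (0 : J → X) = 0 := by
  funext t
  simp [delta]

theorem delta_iter_add {J X : Type*} [Add J] [AddCommGroup X] (h : J) (k : ℕ) (f g : J → X) :
    (delta h)^[k] (f + g) = (delta h)^[k] f + (delta h)^[k] g := by
  induction k generalizing f g with
  | zero => rfl
  | succ k ih =>
    rw [Function.iterate_succ_apply, Function.iterate_succ_apply, Function.iterate_succ_apply,
      delta_add, ih]

theorem delta_iter_smul {J X : Type*} [Add J] [AddCommGroup X] [Module ℂ X]
    (h : J) (k : ℕ) (c : ℂ) (f : J → X) :
    (delta h)^[k] (c • f) = c • (delta h)^[k] f := by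
  induction k generalizing f with
  | zero => rfl
  | succ k ih =>
    rw [Function.iterate_succ_apply, Function.iterate_succ_apply, delta_smul, ih]

theorem delta_iter_zero {J X : Type*} [Add J] [AddCommGroup X] (h : J) (k : ℕ) :
    (delta h)^[k] (0 : J → X) = 0 :=
  Function.iterate_fixed (delta_zero h) k

/-- The space `P^n(J, X)` of polynomials of degree at most `n`, as a `ℂ`-submodule of the
space of all functions `J → X`. -/
def polySpace (J X : Type*) [Add J] [TopologicalSpace J] [AddCommGroup X] [Module ℂ X]
    [TopologicalSpace X] [IsTopologicalAddGroup X] [ContinuousSMul ℂ X] (n : ℕ) :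
    Submodule ℂ (J → X) where
  carrier := {p | IsPolyDeg n p}
  zero_mem' := ⟨continuous_zero, fun h => delta_iter_zero h (n + 1)⟩
  add_mem' := by
    rintro f g ⟨hfc, hfd⟩ ⟨hgc, hgd⟩
    exact ⟨hfc.add hgc, fun h => by rw [delta_iter_add, hfd h, hgd h, add_zero]⟩
  smul_mem' := by
    rintro c f ⟨hfc, hfd⟩
    exact ⟨hfc.const_smul c, fun h => by rw [delta_iter_smul, hfd h, smul_zero]⟩

/-!
If `p` is a polynomial on `G` vanishing on `H` and `m • x ∈ H` with `m ≠ 0`, then `k ↦ p (k • x)`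
is a polynomial on `ℤ` vanishing on `mℤ`. Its difference with step `m` is a polynomial of lower
degree vanishing on `mℤ`, hence zero by induction on the degree; so it is `m`-periodic. A
periodic polynomial on `ℤ` is constant, since its difference is again periodic of lower degree,
hence constant, and sums to zero over a period. Thus `p x = 0`; the rank inequality follows
because restriction is linear and injective.
-/

open Finset fwdDiff

section FwdDiff

variable {J X : Type*} [AddCommMonoid J] [AddCommGroup X]

theorem delta_eq_fwdDiff (h : J) : (delta h : (J → X) → J → X) = fwdDiff h := rfl

theorem fwdDiff_comm (h h' : J) (f : J → X) : Δ_[h] (Δ_[h'] f) = Δ_[h'] (Δ_[h] f) := by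
  funext y
  simp only [fwdDiff, add_right_comm y h h']
  abel

theorem fwdDiff_eq_zero_iff_periodic {h : J} {f : J → X} :
    Δ_[h] f = 0 ↔ Function.Periodic f h := by
  simp only [funext_iff, fwdDiff, Pi.zero_apply, sub_eq_zero, Function.Periodic]

theorem fwdDiff_nsmul_apply (h : J) (m : ℕ) (f : J → X) (y : J) :
    Δ_[m • h] f y = ∑ i ∈ range m, Δ_[h] f (y + i • h) := by
  simp only [fwdDiff, add_assoc, ← succ_nsmul]
  simpa using (sum_range_sub (fun i => f (y + i • h)) m).symm

theorem fwdDiff_iter_fwdDiff_nsmul_eq_zero {h : J} {N : ℕ} {f : J → X}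
    (hf : Δ_[h] ^[N + 1] f = 0) (m : ℕ) : Δ_[h] ^[N] (Δ_[m • h] f) = 0 := by
  have hsum : Δ_[m • h] f = ∑ i ∈ range m, fun y => Δ_[h] f (y + i • h) := by
    funext y
    rw [fwdDiff_nsmul_apply, Finset.sum_apply]
  rw [hsum, fwdDiff_iter_finsetSum]
  refine sum_eq_zero fun i _ => funext fun y => ?_
  rw [fwdDiff_iter_comp_add, ← Function.iterate_succ_apply, hf, Pi.zero_apply, Pi.zero_apply]

theorem fwdDiff_iter_comp_addMonoidHom {K : Type*} [AddCommMonoid K] (φ : J →+ K) (h : J)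
    (N : ℕ) (f : K → X) : Δ_[h] ^[N] (f ∘ φ) = Δ_[φ h] ^[N] f ∘ φ := by
  induction N generalizing f with
  | zero => rfl
  | succ N ih =>
    have hstep : Δ_[h] (f ∘ φ) = Δ_[φ h] f ∘ φ := by
      funext y
      simp only [fwdDiff, Function.comp_apply, map_add]
    rw [Function.iterate_succ_apply, Function.iterate_succ_apply, hstep, ih]

/-- By induction `Δ_[h] f` is `h`-periodic, so its sum over the period `m • h`, which vanishes,
is `m • Δ_[h] f`. -/
theorem Function.Periodic.of_nsmul_of_fwdDiff_iter_eq_zero [IsAddTorsionFree X] {h : J} {m : ℕ}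
    (hm : m ≠ 0) {N : ℕ} {f : J → X} (hf : Δ_[h] ^[N] f = 0)
    (hper : Function.Periodic f (m • h)) : Function.Periodic f h := by
  induction N generalizing f with
  | zero =>
    rw [Function.iterate_zero_apply] at hf
    simp [hf, Function.Periodic]
  | succ N ih =>
    have hdiff_per : Function.Periodic (Δ_[h] f) h := by
      refine ih hf (fwdDiff_eq_zero_iff_periodic.mp ?_)
      rw [fwdDiff_comm, fwdDiff_eq_zero_iff_periodic.mpr hper]
      exact funext fun _ => sub_self 0
    rw [← fwdDiff_eq_zero_iff_periodic]
    funext y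
    have hsum : m • Δ_[h] f y = 0 :=
      calc m • Δ_[h] f y = ∑ i ∈ range m, Δ_[h] f (y + i • h) := by
            simp only [hdiff_per.nsmul _ _, sum_const, card_range]
        _ = Δ_[m • h] f y := (fwdDiff_nsmul_apply h m f y).symm
        _ = 0 := congrFun (fwdDiff_eq_zero_iff_periodic.mpr hper) y
    exact (nsmul_eq_zero_iff.mp hsum).resolve_right hm

end FwdDiff

theorem eq_zero_of_fwdDiff_one_iter_eq_zero_of_dvd {X : Type*} [AddCommGroup X]
    [IsAddTorsionFree X] {m : ℕ} (hm : m ≠ 0) {N : ℕ} {g : ℤ → X} (hg : Δ_[1] ^[N] g = 0)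
    (hvan : ∀ k : ℤ, (m : ℤ) ∣ k → g k = 0) : g = 0 := by
  induction N generalizing g with
  | zero => exact hg
  | succ N ih =>
    have hdiff : Δ_[m • 1] g = 0 := by
      refine ih (fwdDiff_iter_fwdDiff_nsmul_eq_zero hg m) fun k hk => ?_
      rw [nsmul_one, fwdDiff, hvan k hk, hvan _ (dvd_add hk dvd_rfl), sub_zero]
    have hper : Function.Periodic g 1 :=
      Function.Periodic.of_nsmul_of_fwdDiff_iter_eq_zero hm hg
        (fwdDiff_eq_zero_iff_periodic.mp hdiff)
    funext k
    simpa [hvan 0 (dvd_zero _)] using hper.zsmul_eq k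

theorem eq_zero_of_fwdDiff_iter_eq_zero_of_torsion_quotient {A X : Type*} [AddCommGroup A]
    [AddCommGroup X] [IsAddTorsionFree X] {H : AddSubgroup A}
    (htor : ∀ x : A ⧸ H, IsOfFinAddOrder x) {N : ℕ} {f : A → X} (hf : ∀ h, Δ_[h] ^[N] f = 0)
    (hvan : ∀ t ∈ H, f t = 0) : f = 0 := by
  funext x
  set m := addOrderOf (x : A ⧸ H)
  have hm : m ≠ 0 := (htor _).addOrderOf_pos.ne'
  have hmx : m • x ∈ H := by
    rw [← QuotientAddGroup.eq_zero_iff, QuotientAddGroup.mk_nsmul]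
    exact addOrderOf_nsmul_eq_zero _
  have hline : f ∘ zmultiplesHom A x = 0 := by
    refine eq_zero_of_fwdDiff_one_iter_eq_zero_of_dvd hm (N := N) ?_ ?_
    · rw [fwdDiff_iter_comp_addMonoidHom, zmultiplesHom_apply, one_zsmul, hf]
      rfl
    · rintro _ ⟨j, rfl⟩
      rw [Function.comp_apply, zmultiplesHom_apply, mul_comm, mul_zsmul, natCast_zsmul]
      exact hvan _ (H.zsmul_mem hmx j)
  simpa using congrFun hline 1

section Polynomials

variable {J K X : Type*} [AddCommMonoid J] [AddCommMonoid K] [TopologicalSpace J]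
  [TopologicalSpace K] [AddCommGroup X] [TopologicalSpace X]

theorem IsPolyDeg.comp_addMonoidHom {n : ℕ} {f : K → X} (hf : IsPolyDeg n f) (φ : J →+ K)
    (hφ : Continuous φ) : IsPolyDeg n (f ∘ φ) :=
  ⟨hf.1.comp hφ, fun h => by
    rw [delta_eq_fwdDiff, fwdDiff_iter_comp_addMonoidHom, ← delta_eq_fwdDiff, hf.2]
    rfl⟩

variable [Module ℂ X] [IsTopologicalAddGroup X] [ContinuousSMul ℂ X]

def polySpace.comap (n : ℕ) (φ : J →+ K) (hφ : Continuous φ) :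
    polySpace K X n →ₗ[ℂ] polySpace J X n where
  toFun p := ⟨p.1 ∘ φ, IsPolyDeg.comp_addMonoidHom p.2 φ hφ⟩
  map_add' _ _ := rfl
  map_smul' _ _ := rfl

end Polynomials

theorem restriction_to_torsion_quotient_subgroup_injective_general
    {G X : Type*} [AddCommGroup G] [TopologicalSpace G]
    [AddCommGroup X] [Module ℂ X] [TopologicalSpace X] [IsTopologicalAddGroup X]
    [ContinuousSMul ℂ X]
    (H : AddSubgroup G)
    (htor : ∀ x : G ⧸ H, IsOfFinAddOrder x) (n : ℕ) :
    (∀ p q : G → X, IsPolyDeg n p → IsPolyDeg n q →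
        (∀ x : H, p (x : G) = q (x : G)) → p = q) ∧
    Module.rank ℂ (polySpace G X n) ≤ Module.rank ℂ (polySpace H X n) := by
  have : IsAddTorsionFree X := .of_isTorsionFree ℂ X
  have hinj : ∀ p q : G → X, IsPolyDeg n p → IsPolyDeg n q →
      (∀ x : H, p (x : G) = q (x : G)) → p = q := by
    intro p q hp hq hpq
    have hdiff : IsPolyDeg n (p - q) := (polySpace G X n).sub_mem hp hq
    rw [← sub_eq_zero]
    exact eq_zero_of_fwdDiff_iter_eq_zero_of_torsion_quotient htor hdiff.2
      fun t ht => sub_eq_zero.mpr (hpq ⟨t, ht⟩)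
  refine ⟨hinj, LinearMap.rank_le_of_injective
    (polySpace.comap n H.subtype continuous_subtype_val) fun p q hpq => ?_⟩
  exact Subtype.ext (hinj p q p.2 q.2 fun x => congrFun (congrArg Subtype.val hpq) x)

/-- if `H` is a closed subgroup of an abelian topological group `G` with
`G/H` a torsion group, then the restriction map `P^n(G, X) → P^n(H, X)` is injective;
consequently `dim P^n(G, X) ≤ dim P^n(H, X)`. -/
theorem restriction_to_torsion_quotient_subgroup_injective
    {G X : Type*} [AddCommGroup G] [TopologicalSpace G] [IsTopologicalAddGroup G]
    [AddCommGroup X] [Module ℂ X] [TopologicalSpace X] [IsTopologicalAddGroup X]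
    [ContinuousSMul ℂ X]
    (H : AddSubgroup G) (hHclosed : IsClosed (H : Set G))
    (htor : ∀ x : G ⧸ H, IsOfFinAddOrder x) (n : ℕ) :
    (∀ p q : G → X, IsPolyDeg n p → IsPolyDeg n q →
        (∀ x : H, p (x : G) = q (x : G)) → p = q) ∧
    Module.rank ℂ (polySpace G X n) ≤ Module.rank ℂ (polySpace H X n) :=
  restriction_to_torsion_quotient_subgroup_injective_general H htor n
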